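/- arXiv:0808.1359 — 3 statements merged into one kernel-verified Lean document; each statement's English description precedes it below -/
import Mathlib

section
/- Let 2 ≤ p ≤ ∞ and 2 ≤ q ≤ ∞. Then M(H_p, ℓ_q) = ℓ_∞, i.e., a sequence λ is a multiplier from H_p into ℓ_q if and only if λ is bounded. -/
open MeasureTheory Complex Filter Topology Set
open scoped ENNReal

noncomputable section

/-- The `n`-th Taylor coefficient of `f` at `0`. -/
def taylorCoeff (f : ℂ → ℂ) (n : ℕ) : ℂ := iteratedDeriv n f 0 / n.factorial

/-- The `p`-integral mean of `f` on the circle of radius `r` (finite `p`). -/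
def circleMean (p : ℝ) (f : ℂ → ℂ) (r : ℝ) : ℝ :=
  ((1 / (2 * Real.pi)) * ∫ t in (0:ℝ)..(2 * Real.pi),
      ‖f ((r : ℂ) * Complex.exp (t * Complex.I))‖ ^ p) ^ (1 / p)

/-- The sup of `|f|` on the circle of radius `r`. -/
def circleSup (f : ℂ → ℂ) (r : ℝ) : ℝ :=
  ⨆ t : ℝ, ‖f ((r : ℂ) * Complex.exp (t * Complex.I))‖

def hardyMean (p : ℝ≥0∞) (f : ℂ → ℂ) (r : ℝ) : ℝ :=
  if p = ⊤ then circleSup f r else circleMean p.toReal f r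

/-- Membership in the Hardy space `H_p` of the unit disk. -/
def MemHardy (p : ℝ≥0∞) (f : ℂ → ℂ) : Prop :=
  AnalyticOn ℂ f (Metric.ball (0:ℂ) 1) ∧
    BddAbove ((fun r => hardyMean p f r) '' Set.Ico (0:ℝ) 1)

/-- The `H_p` norm: the sup of the `p`-means over radii `0 ≤ r < 1`. -/
def hardyNorm (p : ℝ≥0∞) (f : ℂ → ℂ) : ℝ :=
  sSup ((fun r => hardyMean p f r) '' Set.Ico (0:ℝ) 1)

/-- The `ℓ_q` norm of a sequence. -/
def lqNorm (q : ℝ≥0∞) (x : ℕ → ℂ) : ℝ :=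
  if q = ⊤ then ⨆ n, ‖x n‖ else (∑' n, ‖x n‖ ^ q.toReal) ^ (1 / q.toReal)

/-- Coordinatewise multiplication of sequences. -/
def seqMul (l x : ℕ → ℂ) : ℕ → ℂ := fun n => l n * x n

/-- A Banach sequence lattice on ℤ₊: a Banach ideal space of sequences with monotone norm. -/
structure SeqLattice where
  Mem : (ℕ → ℂ) → Prop
  norm : (ℕ → ℂ) → ℝ
  zero_mem : Mem 0
  add_mem : ∀ x y, Mem x → Mem y → Mem (x + y)
  smul_mem : ∀ (c : ℂ) x, Mem x → Mem (c • x)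
  norm_nonneg : ∀ x, 0 ≤ norm x
  norm_eq_zero_iff : ∀ x, Mem x → (norm x = 0 ↔ x = 0)
  norm_add_le : ∀ x y, Mem x → Mem y → norm (x + y) ≤ norm x + norm y
  norm_smul : ∀ (c : ℂ) x, Mem x → norm (c • x) = ‖c‖ * norm x
  ideal : ∀ x y, Mem x → (∀ n, ‖y n‖ ≤ ‖x n‖) → Mem y ∧ norm y ≤ norm x
  complete : ∀ u : ℕ → (ℕ → ℂ), (∀ m, Mem (u m)) →
    (∀ ε : ℝ, 0 < ε → ∃ N, ∀ m ≥ N, ∀ n ≥ N, norm (u m - u n) ≤ ε) →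
    ∃ x, Mem x ∧ Tendsto (fun m => norm (u m - x)) atTop (𝓝 0)

/-- Order continuity: every nonnegative, pointwise nonincreasing sequence of elements of `E`
converging pointwise to `0` converges to `0` in the norm of `E`. -/
def OrderContinuous (E : SeqLattice) : Prop :=
  ∀ u : ℕ → ℕ → ℝ,
    (∀ m, E.Mem fun k => (u m k : ℂ)) →
    (∀ m k, 0 ≤ u m k) →
    (∀ k, Antitone fun m => u m k) →
    (∀ k, Tendsto (fun m => u m k) atTop (𝓝 0)) →
    Tendsto (fun m => E.norm fun k => (u m k : ℂ)) atTop (𝓝 0)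

/-- A set of sequences is solid if it is an ideal. -/
def IsSolid (S : Set (ℕ → ℂ)) : Prop :=
  ∀ x ∈ S, ∀ y : ℕ → ℂ, (∀ n, ‖y n‖ ≤ ‖x n‖) → y ∈ S

/-- The solid hull: the smallest solid set containing `A`. -/
def solidHull (A : Set (ℕ → ℂ)) : Set (ℕ → ℂ) := ⋂₀ {S | IsSolid S ∧ A ⊆ S}

/-- The set of multipliers from `F` into `E`. -/
def MultSet (F E : Set (ℕ → ℂ)) : Set (ℕ → ℂ) := {l | ∀ x ∈ F, seqMul l x ∈ E}

/-- A Banach space of analytic functions on the unit disk. -/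
structure AnalBanach where
  Mem : (ℂ → ℂ) → Prop
  norm : (ℂ → ℂ) → ℝ
  analytic : ∀ f, Mem f → AnalyticOn ℂ f (Metric.ball (0:ℂ) 1)
  zero_mem : Mem 0
  add_mem : ∀ f g, Mem f → Mem g → Mem (f + g)
  smul_mem : ∀ (c : ℂ) f, Mem f → Mem (c • f)
  norm_nonneg : ∀ f, 0 ≤ norm f
  norm_eq_zero_iff : ∀ f, Mem f → (norm f = 0 ↔ ∀ z ∈ Metric.ball (0:ℂ) 1, f z = 0)
  norm_add_le : ∀ f g, Mem f → Mem g → norm (f + g) ≤ norm f + norm g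
  norm_smul : ∀ (c : ℂ) f, Mem f → norm (c • f) = ‖c‖ * norm f
  complete : ∀ u : ℕ → (ℂ → ℂ), (∀ m, Mem (u m)) →
    (∀ ε : ℝ, 0 < ε → ∃ N, ∀ m ≥ N, ∀ n ≥ N, norm (u m - u n) ≤ ε) →
    ∃ f, Mem f ∧ Tendsto (fun m => norm (u m - f)) atTop (𝓝 0)

/-- The Taylor coefficient space `X̂` of a space of analytic functions. -/
def coeffSpace (X : AnalBanach) : Set (ℕ → ℂ) := {a | ∃ f, X.Mem f ∧ a = taylorCoeff f}

/-- `H_p ↪ X` continuously. -/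
def EmbedHardyIn (p : ℝ≥0∞) (X : AnalBanach) : Prop :=
  ∃ C : ℝ, 0 < C ∧ ∀ f, MemHardy p f → X.Mem f ∧ X.norm f ≤ C * hardyNorm p f

/-- `X ↪ H_p` continuously. -/
def EmbedInHardy (X : AnalBanach) (p : ℝ≥0∞) : Prop :=
  ∃ C : ℝ, 0 < C ∧ ∀ f, X.Mem f → MemHardy p f ∧ hardyNorm p f ≤ C * X.norm f

/-- Hausdorff measure of noncompactness of a set in a Banach sequence lattice. -/
def hmnc (E : SeqLattice) (A : Set (ℕ → ℂ)) : ℝ :=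
  sInf {ε : ℝ | 0 < ε ∧ ∃ Z : Finset (ℕ → ℂ),
    (∀ z ∈ Z, E.Mem z) ∧ ∀ x ∈ A, ∃ z ∈ Z, E.norm (x - z) ≤ ε}

/-- Hausdorff measure of noncompactness of a set of sequences in the `ℓ_q` metric. -/
def hmncLq (q : ℝ≥0∞) (A : Set (ℕ → ℂ)) : ℝ :=
  sInf {ε : ℝ | 0 < ε ∧ ∃ Z : Finset (ℕ → ℂ), ∀ x ∈ A, ∃ z ∈ Z, lqNorm q (x - z) ≤ ε}

/-- Relative compactness (total boundedness) of a set in a Banach sequence lattice. -/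
def RelCompactIn (E : SeqLattice) (A : Set (ℕ → ℂ)) : Prop :=
  ∀ ε : ℝ, 0 < ε → ∃ Z : Finset (ℕ → ℂ),
    (∀ z ∈ Z, E.Mem z) ∧ ∀ x ∈ A, ∃ z ∈ Z, E.norm (x - z) ≤ ε

/-- Relative compactness (total boundedness) of a set of sequences in `ℓ_q`. -/
def RelCompactInLq (q : ℝ≥0∞) (A : Set (ℕ → ℂ)) : Prop :=
  ∀ ε : ℝ, 0 < ε → ∃ Z : Finset (ℕ → ℂ), ∀ x ∈ A, ∃ z ∈ Z, lqNorm q (x - z) ≤ ε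

/-- The closed unit ball of `H_p`. -/
def hardyBall (p : ℝ≥0∞) : Set (ℂ → ℂ) := {f | MemHardy p f ∧ hardyNorm p f ≤ 1}

/-- The multiplier operator `M_λ : H_p → ℓ_q` is (bounded into `ℓ_q` and) compact. -/
def MulCompactHardyLq (p q : ℝ≥0∞) (l : ℕ → ℂ) : Prop :=
  (∀ f, MemHardy p f → Memℓp (seqMul l (taylorCoeff f)) q) ∧
  RelCompactInLq q ((fun f => seqMul l (taylorCoeff f)) '' hardyBall p)

/-- The multiplier operator `M_λ : X → E` maps `X` into `E` and is compact. -/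
def MulCompactX (X : AnalBanach) (E : SeqLattice) (l : ℕ → ℂ) : Prop :=
  (∀ f, X.Mem f → E.Mem (seqMul l (taylorCoeff f))) ∧
  RelCompactIn E ((fun f => seqMul l (taylorCoeff f)) '' {f | X.Mem f ∧ X.norm f ≤ 1})


/-! If `λ` is bounded then `λ f̂ ∈ ℓ₂ ⊆ ℓ_q` for `f ∈ H_p ⊆ H₂`, since the Taylor coefficients of
an `H₂` function are square summable: by Parseval on the circle of radius `r`,
`∑ |f̂(n)|² r²ⁿ` is the mean of `|f|²` over that circle, and one lets `r → 1`. Conversely, if `λ` is unbounded, choose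
`n₀ < n₁ < ⋯` with `|λ_{n_k}| > 4ᵏ`; the function `f(z) = ∑ 2⁻ᵏ z^{n_k}` has absolutely summable
coefficients, hence is bounded and lies in every `H_p`, while `|λ_{n_k} f̂(n_k)| > 2ᵏ`. -/

open FormalMultilinearSeries Real

theorem exists_summable_nonneg_not_bddAbove_mul {u : ℕ → ℝ} (hu : ¬BddAbove (range u)) :
    ∃ a : ℕ → ℝ, (∀ n, 0 ≤ a n) ∧ Summable a ∧ ¬BddAbove (range fun n => u n * a n) := by
  have hfreq : ∀ k : ℕ, ∃ᶠ n in atTop, (4 : ℝ) ^ k < u n := fun k => by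
    by_contra h
    exact hu (isBoundedUnder_of_eventually_le (not_frequently.mp h |>.mono
      fun n hn => not_lt.mp hn)).bddAbove_range
  obtain ⟨φ, hφ, hφu⟩ := extraction_forall_of_frequently hfreq
  set a := Function.extend φ (fun k => (1 / 2 : ℝ) ^ k) 0
  have ha : ∀ k, a (φ k) = (1 / 2) ^ k := hφ.injective.extend_apply _ _
  have ha0 : ∀ n ∉ range φ, a n = 0 := fun n hn => Function.extend_apply' _ _ n hn
  refine ⟨a, fun n => ?_, ?_, ?_⟩
  · by_cases hn : n ∈ range φ
    · obtain ⟨k, rfl⟩ := hn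
      rw [ha]; positivity
    · rw [ha0 n hn]
  · rw [← hφ.injective.summable_iff ha0]
    simpa [Function.comp_def, ha] using summable_geometric_two
  · rintro ⟨C, hC⟩
    obtain ⟨k, hk⟩ := pow_unbounded_of_one_lt C (one_lt_two : (1 : ℝ) < 2)
    have h4 : (2 : ℝ) ^ k = 4 ^ k * (1 / 2) ^ k := by rw [← mul_pow]; norm_num
    have := hC ⟨φ k, rfl⟩
    simp only [ha] at this
    linarith [mul_lt_mul_of_pos_right (hφu k) (by positivity : (0 : ℝ) < (1 / 2) ^ k)]

theorem Memℓp.infty_seqMul {p : ℝ≥0∞} {l x : ℕ → ℂ} (hl : Memℓp l ⊤) (hx : Memℓp x p) :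
    Memℓp (seqMul l x) p := by
  obtain ⟨C, hC⟩ := hl.bddAbove
  refine (hx.norm.const_mul C).mono fun n => ?_
  rw [seqMul, norm_mul]
  exact mul_le_mul_of_nonneg_right (hC ⟨n, rfl⟩) (norm_nonneg _)

theorem HasFPowerSeriesOnBall.taylorCoeff_eq {f : ℂ → ℂ} {P : FormalMultilinearSeries ℂ ℂ ℂ}
    {r : ℝ≥0∞} (h : HasFPowerSeriesOnBall f P 0 r) (n : ℕ) : taylorCoeff f n = P.coeff n := by
  have h1 := h.factorial_smul (1 : ℂ) n
  rw [taylorCoeff, iteratedDeriv_eq_iteratedFDeriv, ← h1, FormalMultilinearSeries.coeff]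
  simp [nsmul_eq_mul, Nat.factorial_ne_zero]

section SummableCoeff

variable {a : ℕ → ℂ}

theorem hasFPowerSeriesOnBall_ofScalarsSum (ha : Summable (‖a ·‖)) :
    HasFPowerSeriesOnBall (ofScalarsSum a) (ofScalars ℂ a) 0 1 := by
  have hrad : ((1 : NNReal) : ℝ≥0∞) ≤ (ofScalars ℂ a).radius :=
    (ofScalars ℂ a).le_radius_of_summable_norm (by simpa [ofScalars_norm] using ha)
  rw [ENNReal.coe_one] at hrad
  exact ((ofScalars ℂ a).hasFPowerSeriesOnBall (one_pos.trans_le hrad)).mono one_pos hrad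

theorem taylorCoeff_ofScalarsSum (ha : Summable (‖a ·‖)) : taylorCoeff (ofScalarsSum a) = a :=
  funext fun n => by rw [(hasFPowerSeriesOnBall_ofScalarsSum ha).taylorCoeff_eq, coeff_ofScalars]

theorem norm_ofScalarsSum_le_tsum (ha : Summable (‖a ·‖)) {z : ℂ} (hz : ‖z‖ ≤ 1) :
    ‖ofScalarsSum a z‖ ≤ ∑' n, ‖a n‖ := by
  rw [ofScalars_sum_eq]
  refine tsum_of_norm_bounded ha.hasSum fun n => ?_
  rw [norm_smul, norm_pow]
  exact mul_le_of_le_one_right (norm_nonneg _) (pow_le_one₀ (norm_nonneg z) hz)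

end SummableCoeff

section Circle

variable {f : ℂ → ℂ} {r : ℝ}

theorem circleMean_eq_circleAverage (p : ℝ) (f : ℂ → ℂ) (r : ℝ) :
    circleMean p f r = circleAverage (‖f ·‖ ^ p) 0 r ^ p⁻¹ := by
  simp [circleMean, circleAverage_def, circleMap_zero]

theorem norm_le_circleSup (hf : ContinuousOn f (Metric.sphere 0 |r|)) {z : ℂ}
    (hz : z ∈ Metric.sphere 0 |r|) : ‖f z‖ ≤ circleSup f r := by
  obtain ⟨C, hC⟩ := (isCompact_sphere (0 : ℂ) |r|).exists_bound_of_continuousOn hf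
  rw [← range_circleMap] at hz hC
  obtain ⟨t, rfl⟩ := hz
  simp only [circleSup, ← circleMap_zero]
  exact le_ciSup ⟨C, forall_mem_range.2 fun t => hC _ (mem_range_self t)⟩ t

theorem circleMean_le_of_forall_norm_le {p C : ℝ} (hp : 0 < p) (hC : 0 ≤ C)
    (hf : ContinuousOn f (Metric.sphere 0 |r|)) (hfC : ∀ z ∈ Metric.sphere 0 |r|, ‖f z‖ ≤ C) :
    circleMean p f r ≤ C := by
  rw [circleMean_eq_circleAverage, rpow_inv_le_iff_of_pos
    (circleAverage_nonneg_of_nonneg fun _ _ => by positivity) hC hp]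
  exact circleAverage_mono_on_of_le_circle
    (hf.norm.rpow_const fun _ _ => Or.inr hp.le).circleIntegrable'
    fun z hz => rpow_le_rpow (norm_nonneg _) (hfC z hz) hp.le

theorem sq_le_rpow_add_one {x p : ℝ} (hx : 0 ≤ x) (hp : 2 ≤ p) : x ^ 2 ≤ x ^ p + 1 := by
  rcases le_or_gt x 1 with hx1 | hx1
  · nlinarith [rpow_nonneg hx p]
  · have := rpow_le_rpow_of_exponent_le hx1.le hp
    rw [rpow_two] at this
    linarith

theorem circleAverage_sq_le_of_circleMean_le {p B : ℝ} (hp : 2 ≤ p)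
    (hf : ContinuousOn f (Metric.sphere 0 |r|)) (hB : circleMean p f r ≤ B) :
    circleAverage (‖f ·‖ ^ 2) 0 r ≤ B ^ p + 1 := by
  have hp0 : 0 < p := by linarith
  have hpow : ContinuousOn (‖f ·‖ ^ p) (Metric.sphere 0 |r|) :=
    hf.norm.rpow_const fun _ _ => Or.inr hp0.le
  have hmean : circleAverage (‖f ·‖ ^ p) 0 r ≤ B ^ p := by
    have havg : 0 ≤ circleAverage (‖f ·‖ ^ p) 0 r :=
      circleAverage_nonneg_of_nonneg fun _ _ => by positivity
    rw [circleMean_eq_circleAverage] at hB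
    exact (rpow_inv_le_iff_of_pos havg ((rpow_nonneg havg _).trans hB) hp0).1 hB
  calc circleAverage (‖f ·‖ ^ 2) 0 r ≤ circleAverage (fun z => ‖f z‖ ^ p + 1) 0 r :=
        circleAverage_mono (hf.norm.pow 2).circleIntegrable'
          (hpow.add continuousOn_const).circleIntegrable' fun _ _ => sq_le_rpow_add_one (norm_nonneg _) hp
    _ = circleAverage (‖f ·‖ ^ p) 0 r + 1 := by
        rw [circleAverage_fun_add hpow.circleIntegrable' continuousOn_const.circleIntegrable',
          circleAverage_const]
    _ ≤ B ^ p + 1 := by linarith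

theorem circleAverage_sq_le_of_circleSup_le {B : ℝ} (hf : ContinuousOn f (Metric.sphere 0 |r|))
    (hB : circleSup f r ≤ B) : circleAverage (‖f ·‖ ^ 2) 0 r ≤ B ^ 2 :=
  circleAverage_mono_on_of_le_circle (hf.norm.pow 2).circleIntegrable' fun _ hz =>
    pow_le_pow_left₀ (norm_nonneg _) ((norm_le_circleSup hf hz).trans hB) 2

theorem fourierCoeffOn_circleMap_eq_taylorCoeff (hr : 0 < r)
    (hf : DifferentiableOn ℂ f (Metric.closedBall 0 r)) (n : ℕ) :
    fourierCoeffOn two_pi_pos (fun t => f (circleMap 0 r t)) n = taylorCoeff f n * r ^ n := by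
  have hC := hf.circleIntegral_one_div_sub_center_pow_smul hr n
  have hintegrand : ∀ θ : ℝ, deriv (circleMap 0 r) θ • (1 / (circleMap 0 r θ - 0) ^ (n + 1)) •
      f (circleMap 0 r θ) = (I / (r : ℂ) ^ n) *
        (fourier (-(n : ℤ)) (θ : AddCircle (2 * π)) • f (circleMap 0 r θ)) := fun θ => by
    have hr' : (r : ℂ) ≠ 0 := by exact_mod_cast hr.ne'
    have hfour : fourier (-(n : ℤ)) (θ : AddCircle (2 * π)) = (cexp (θ * I) ^ n)⁻¹ := by
      rw [fourier_coe_apply, ← Complex.exp_nat_mul, ← Complex.exp_neg]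
      congr 1
      push_cast
      field_simp
    rw [deriv_circleMap, hfour, circleMap_zero, sub_zero, smul_eq_mul, smul_eq_mul, smul_eq_mul]
    field_simp
    ring
  rw [circleIntegral, intervalIntegral.integral_congr (fun θ _ => hintegrand θ),
    intervalIntegral.integral_const_mul] at hC
  rw [fourierCoeffOn_eq_integral, taylorCoeff, Complex.real_smul, sub_zero]
  push_cast
  have hr' : (r : ℂ) ^ n ≠ 0 := pow_ne_zero _ (by exact_mod_cast hr.ne')
  have hπ : (π : ℂ) ≠ 0 := by exact_mod_cast pi_ne_zero
  rw [smul_eq_mul] at hC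
  field_simp at hC ⊢
  exact hC

theorem sum_range_sq_norm_taylorCoeff_mul_pow_le (hr : 0 < r)
    (hf : DifferentiableOn ℂ f (Metric.closedBall 0 r)) (N : ℕ) :
    ∑ n ∈ Finset.range N, ‖taylorCoeff f n * r ^ n‖ ^ 2 ≤ circleAverage (‖f ·‖ ^ 2) 0 r := by
  obtain ⟨C, hC⟩ := (isCompact_closedBall (0 : ℂ) r).exists_bound_of_continuousOn hf.continuousOn
  have hL2 : MemLp (fun t => f (circleMap 0 r t)) 2 (volume.restrict (Ioc 0 (2 * π))) :=
    .of_bound (hf.continuousOn.comp_continuous (continuous_circleMap 0 r)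
      (circleMap_mem_closedBall 0 hr.le)).aestronglyMeasurable C
      (ae_of_all _ fun t => hC _ (circleMap_mem_closedBall 0 hr.le t))
  have := sum_le_hasSum ((Finset.range N).map Nat.castEmbedding) (fun _ _ => by positivity)
    (hasSum_sq_fourierCoeffOn two_pi_pos hL2)
  simpa [fourierCoeffOn_circleMap_eq_taylorCoeff hr hf, circleAverage_def] using this

end Circle

theorem memℓp_two_taylorCoeff_of_circleAverage_sq_le {f : ℂ → ℂ}
    (hf : DifferentiableOn ℂ f (Metric.ball 0 1)) {K : ℝ}
    (hK : ∀ r ∈ Ioo (0 : ℝ) 1, circleAverage (‖f ·‖ ^ 2) 0 r ≤ K) :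
    Memℓp (taylorCoeff f) 2 := by
  refine memℓp_gen ?_
  simp only [ENNReal.toReal_ofNat, rpow_two]
  refine summable_of_sum_range_le (c := K) (fun _ => by positivity) fun N => ?_
  have hcont : Continuous fun r : ℝ => ∑ n ∈ Finset.range N, ‖taylorCoeff f n * r ^ n‖ ^ 2 := by
    fun_prop
  have hle : ∀ᶠ r : ℝ in 𝓝[<] 1, ∑ n ∈ Finset.range N, ‖taylorCoeff f n * r ^ n‖ ^ 2 ≤ K :=
    eventually_of_mem (Ioo_mem_nhdsLT zero_lt_one) fun r hr =>
      (sum_range_sq_norm_taylorCoeff_mul_pow_le hr.1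
        (hf.mono (Metric.closedBall_subset_ball hr.2)) N).trans (hK r hr)
  simpa using le_of_tendsto (hcont.tendsto 1 |>.mono_left nhdsWithin_le_nhds) hle

section Hardy

variable {p : ℝ≥0∞} {f : ℂ → ℂ}

theorem sphere_abs_subset_ball_one {r : ℝ} (hr : r ∈ Ico (0 : ℝ) 1) :
    Metric.sphere (0 : ℂ) |r| ⊆ Metric.ball 0 1 :=
  Metric.sphere_subset_closedBall.trans
    (Metric.closedBall_subset_ball (by rw [abs_of_nonneg hr.1]; exact hr.2))

theorem memHardy_of_forall_norm_le (hp : p ≠ 0) (hf : AnalyticOn ℂ f (Metric.ball 0 1)) {C : ℝ}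
    (hC : 0 ≤ C) (hfC : ∀ z ∈ Metric.ball (0 : ℂ) 1, ‖f z‖ ≤ C) : MemHardy p f := by
  refine ⟨hf, C, forall_mem_image.2 fun r hr => ?_⟩
  have hsub := sphere_abs_subset_ball_one hr
  rw [hardyMean]
  split_ifs with htop
  · simp only [circleSup, ← circleMap_zero]
    exact ciSup_le fun t => hfC _ (hsub (circleMap_mem_sphere' 0 r t))
  · exact circleMean_le_of_forall_norm_le (ENNReal.toReal_pos hp htop) hC
      (hf.continuousOn.mono hsub) fun z hz => hfC z (hsub hz)

theorem memHardy_ofScalarsSum (hp : p ≠ 0) {a : ℕ → ℂ} (ha : Summable (‖a ·‖)) :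
    MemHardy p (ofScalarsSum a) := by
  have hA := (hasFPowerSeriesOnBall_ofScalarsSum ha).analyticOnNhd.analyticOn
  rw [← ENNReal.coe_one, Metric.eball_coe, NNReal.coe_one] at hA
  exact memHardy_of_forall_norm_le hp hA (tsum_nonneg fun _ => norm_nonneg _) fun z hz =>
    norm_ofScalarsSum_le_tsum ha (mem_ball_zero_iff.1 hz).le

theorem MemHardy.exists_circleAverage_sq_le (hp : 2 ≤ p) (hf : MemHardy p f) :
    ∃ K, ∀ r ∈ Ioo (0 : ℝ) 1, circleAverage (‖f ·‖ ^ 2) 0 r ≤ K := by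
  obtain ⟨hA, B, hB⟩ := hf
  have hcont : ∀ r ∈ Ioo (0 : ℝ) 1, ContinuousOn f (Metric.sphere 0 |r|) := fun r hr =>
    hA.continuousOn.mono (sphere_abs_subset_ball_one (Ioo_subset_Ico_self hr))
  have hmean : ∀ r ∈ Ioo (0 : ℝ) 1, hardyMean p f r ≤ B := fun r hr =>
    hB ⟨r, Ioo_subset_Ico_self hr, rfl⟩
  rcases eq_or_ne p ⊤ with rfl | htop
  · exact ⟨B ^ 2, fun r hr => circleAverage_sq_le_of_circleSup_le (hcont r hr)
      (by simpa [hardyMean] using hmean r hr)⟩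
  · have hp' : 2 ≤ p.toReal := by simpa using ENNReal.toReal_mono htop hp
    exact ⟨B ^ p.toReal + 1, fun r hr => circleAverage_sq_le_of_circleMean_le hp' (hcont r hr)
      (by simpa [hardyMean, htop] using hmean r hr)⟩

theorem MemHardy.memℓp_two_taylorCoeff (hp : 2 ≤ p) (hf : MemHardy p f) :
    Memℓp (taylorCoeff f) 2 :=
  have ⟨_, hK⟩ := hf.exists_circleAverage_sq_le hp
  memℓp_two_taylorCoeff_of_circleAverage_sq_le hf.1.differentiableOn hK

end Hardy

theorem memℓp_infty_of_forall_memHardy {p q : ℝ≥0∞} (hp : p ≠ 0) {l : ℕ → ℂ}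
    (h : ∀ f, MemHardy p f → Memℓp (seqMul l (taylorCoeff f)) q) : Memℓp l ⊤ := by
  by_contra hl
  rw [memℓp_infty_iff] at hl
  obtain ⟨a, ha0, ha, hla⟩ := exists_summable_nonneg_not_bddAbove_mul hl
  have hsum : Summable fun n => ‖(a n : ℂ)‖ := by simpa [abs_of_nonneg (ha0 _)] using ha
  have := (h _ (memHardy_ofScalarsSum hp hsum)).of_exponent_ge le_top
  rw [taylorCoeff_ofScalarsSum hsum, memℓp_infty_iff] at this
  exact hla (by simpa [seqMul, abs_of_nonneg (ha0 _)] using this)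

/-- For `2 ≤ p ≤ ∞` and `2 ≤ q ≤ ∞`, `M(H_p, ℓ_q) = ℓ_∞`. -/
theorem stmt_5 (p q : ℝ≥0∞) (hp : 2 ≤ p) (hq : 2 ≤ q) (l : ℕ → ℂ) :
    (∀ f, MemHardy p f → Memℓp (seqMul l (taylorCoeff f)) q) ↔ Memℓp l ⊤ :=
  ⟨memℓp_infty_of_forall_memHardy (zero_lt_two.trans_le hp).ne',
    fun hl _ hf => (hl.infty_seqMul (hf.memℓp_two_taylorCoeff hp)).of_exponent_ge hq⟩
end
end

section
/- Let F and E be order-continuous Banach sequence lattices with ℓ_1 ↪ F ↪ E ↪ ℓ_∞, and let λ ∈ ℓ_∞. Then the Hausdorff measure of noncompactness of the diagonal operator D_λ : F → E satisfies β(D_λ) = limsup_{n→∞} |λ_n| (up to equivalence of constants coming from the embeddings). -/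
/-
Write `C₁, C₂, C₃` for the norms of the embeddings `ℓ_1 ↪ F ↪ E ↪ ℓ_∞`.

Lower bound: the vectors `e_k / C₁` lie in the unit ball of `F`, and the embedding `E ↪ ℓ_∞`
separates their images `λ_k e_k / C₁` in `E` by at least `|λ_k| / (C₁ C₃)`. Infinitely many `k`
have `|λ_k| > limsup |λ_n| / 2`, so by pigeonhole no finite net of radius smaller than
`limsup |λ_n| / (4 C₁ C₃)` covers the image of the ball.

Upper bound: if `|λ_n| ≤ M` for `n ≥ N`, split `D_λ x` into its first `N` coordinates and the
tail. The heads form a bounded subset of a finite-dimensional space, hence have finite nets of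
any radius (measured in `E` through `ℓ_1 ↪ E`), while the tail has `E`-norm at most `M C₂` by
the lattice property.
-/

open MeasureTheory Complex Filter Topology Set
open scoped ENNReal

noncomputable section

def truncate (N : ℕ) (x : ℕ → ℂ) : ℕ → ℂ := fun n => if n < N then x n else 0

def zeroExtend {N : ℕ} (v : Fin N → ℂ) : ℕ → ℂ := fun n => if h : n < N then v ⟨n, h⟩ else 0

namespace SeqLattice

def unitBall (F : SeqLattice) : Set (ℕ → ℂ) := {x | F.Mem x ∧ F.norm x ≤ 1}

def L1EmbedsInto (F : SeqLattice) (C : ℝ) : Prop :=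
  ∀ x : ℕ → ℂ, Summable (fun n => ‖x n‖) → F.Mem x ∧ F.norm x ≤ C * ∑' n, ‖x n‖

def EmbedsInto (F E : SeqLattice) (C : ℝ) : Prop :=
  ∀ x, F.Mem x → E.Mem x ∧ E.norm x ≤ C * F.norm x

def EmbedsIntoLinfty (E : SeqLattice) (C : ℝ) : Prop :=
  ∀ x, E.Mem x → ∀ n, ‖x n‖ ≤ C * E.norm x

def HasFiniteNet (E : SeqLattice) (A : Set (ℕ → ℂ)) (ε : ℝ) : Prop :=
  ∃ Z : Finset (ℕ → ℂ), (∀ z ∈ Z, E.Mem z) ∧ ∀ x ∈ A, ∃ z ∈ Z, E.norm (x - z) ≤ ε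

section Lattice

variable (E : SeqLattice) {x y z : ℕ → ℂ}

theorem sub_mem (hx : E.Mem x) (hy : E.Mem y) : E.Mem (x - y) := by
  simpa [sub_eq_add_neg] using E.add_mem x ((-1 : ℂ) • y) hx (E.smul_mem _ _ hy)

theorem norm_sub_comm (hx : E.Mem x) (hy : E.Mem y) : E.norm (x - y) = E.norm (y - x) := by
  simpa using (E.norm_smul (-1) (x - y) (E.sub_mem hx hy)).symm

theorem norm_sub_le_add (hx : E.Mem x) (hy : E.Mem y) (hz : E.Mem z) :
    E.norm (x - y) ≤ E.norm (x - z) + E.norm (y - z) := by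
  rw [E.norm_sub_comm hy hz]
  simpa using E.norm_add_le (x - z) (z - y) (E.sub_mem hx hz) (E.sub_mem hz hy)

theorem mem_and_norm_le_of_le_mul {c : ℝ} (hc : 0 ≤ c) (hx : E.Mem x)
    (h : ∀ n, ‖y n‖ ≤ c * ‖x n‖) : E.Mem y ∧ E.norm y ≤ c * E.norm x := by
  have hcx := E.ideal ((c : ℂ) • x) y (E.smul_mem _ _ hx) (by simpa [abs_of_nonneg hc] using h)
  rwa [E.norm_smul _ _ hx, Complex.norm_real, Real.norm_of_nonneg hc] at hcx

end Lattice

section Embeddings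

variable {F E : SeqLattice} {C C₂ : ℝ} {x : ℕ → ℂ}

theorem L1EmbedsInto.trans (hF : F.L1EmbedsInto C) (hFE : F.EmbedsInto E C₂) (hC₂ : 0 ≤ C₂) :
    E.L1EmbedsInto (C₂ * C) := fun x hx => by
  obtain ⟨hxF, hxF'⟩ := hF x hx
  obtain ⟨hxE, hxE'⟩ := hFE x hxF
  exact ⟨hxE, by nlinarith⟩

theorem L1EmbedsInto.mem_and_norm_le_sum (hF : F.L1EmbedsInto C) (s : Finset ℕ)
    (hx : ∀ n ∉ s, x n = 0) : F.Mem x ∧ F.norm x ≤ C * ∑ n ∈ s, ‖x n‖ := by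
  have hs : ∀ n ∉ s, ‖x n‖ = 0 := fun n hn => by simp [hx n hn]
  have h := hF x (summable_of_ne_finset_zero hs)
  rwa [tsum_eq_sum hs] at h

theorem L1EmbedsInto.truncate_mem (hF : F.L1EmbedsInto C) (N : ℕ) : F.Mem (truncate N x) :=
  (hF.mem_and_norm_le_sum (Finset.range N) fun n hn => by
    simp_all [truncate]).1

theorem L1EmbedsInto.smul_single_mem_unitBall (hF : F.L1EmbedsInto C) (hC : 0 < C) (k : ℕ) :
    (C : ℂ)⁻¹ • Pi.single k 1 ∈ F.unitBall := by
  obtain ⟨hmem, hnorm⟩ := hF.mem_and_norm_le_sum {k} (x := Pi.single k 1) fun n hn => by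
    simp_all
  refine ⟨F.smul_mem _ _ hmem, ?_⟩
  rw [F.norm_smul _ _ hmem, norm_inv, Complex.norm_real, Real.norm_of_nonneg hC.le]
  simp only [Finset.sum_singleton, Pi.single_eq_same, norm_one, mul_one] at hnorm
  exact inv_mul_le_one_of_le₀ hnorm hC.le

theorem L1EmbedsInto.zeroExtend_mem_and_norm_le (hF : F.L1EmbedsInto C) (hC : 0 ≤ C) {N : ℕ}
    (v : Fin N → ℂ) : F.Mem (zeroExtend v) ∧ F.norm (zeroExtend v) ≤ C * N * ‖v‖ := by
  obtain ⟨hmem, hnorm⟩ := hF.mem_and_norm_le_sum (Finset.range N) (x := zeroExtend v)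
    fun n hn => by simp_all [zeroExtend]
  refine ⟨hmem, hnorm.trans ?_⟩
  rw [← Fin.sum_univ_eq_sum_range (fun n => ‖zeroExtend v n‖), mul_assoc]
  gcongr
  simpa [zeroExtend] using Finset.sum_le_card_nsmul Finset.univ _ _ fun i _ => norm_le_pi_norm v i

theorem L1EmbedsInto.hasFiniteNet_truncate (hF : F.L1EmbedsInto C) (hC : 0 ≤ C) (N : ℕ)
    (R : ℝ) {ε : ℝ} (hε : 0 < ε) :
    F.HasFiniteNet (truncate N '' {x | ∀ n, ‖x n‖ ≤ R}) ε := by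
  classical
  set δ := ε / (C * N + 1)
  obtain ⟨t, -, ht, hcover⟩ :=
    finite_cover_balls_of_compact (isCompact_closedBall (0 : Fin N → ℂ) R)
      (show 0 < δ by positivity)
  refine ⟨ht.toFinset.image zeroExtend, ?_, ?_⟩
  · simp only [Finset.mem_image, Set.Finite.mem_toFinset]
    rintro _ ⟨v, -, rfl⟩
    exact (hF.zeroExtend_mem_and_norm_le hC v).1
  rintro _ ⟨x, hx, rfl⟩
  have hxR : (fun i : Fin N => x i) ∈ Metric.closedBall 0 R := by
    rw [mem_closedBall_zero_iff, pi_norm_le_iff_of_nonneg (le_trans (by positivity) (hx 0))]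
    exact fun i => hx i
  obtain ⟨v, hvt, hxv⟩ := Set.mem_iUnion₂.mp (hcover hxR)
  refine ⟨zeroExtend v, Finset.mem_image_of_mem _ (ht.mem_toFinset.mpr hvt), ?_⟩
  have hsub : truncate N x - zeroExtend v = zeroExtend ((fun i : Fin N => x i) - v) := by
    funext n
    by_cases hn : n < N <;> simp [truncate, zeroExtend, hn]
  rw [hsub]
  rw [Metric.mem_ball, dist_eq_norm] at hxv
  calc F.norm (zeroExtend _) ≤ C * N * ‖(fun i : Fin N => x i) - v‖ :=
        (hF.zeroExtend_mem_and_norm_le hC _).2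
    _ ≤ C * N * δ := by gcongr
    _ ≤ ε := by
      rw [mul_div_assoc', div_le_iff₀ (by positivity)]
      nlinarith

end Embeddings

end SeqLattice

section Net

variable {E : SeqLattice} {A : Set (ℕ → ℂ)} {ε : ℝ}

theorem hmnc_nonneg : 0 ≤ hmnc E A :=
  Real.sInf_nonneg fun _ hε => hε.1.le

theorem hmnc_le (hε : 0 < ε) (h : E.HasFiniteNet A ε) : hmnc E A ≤ ε :=
  csInf_le ⟨0, fun _ hε => hε.1.le⟩ ⟨hε, h⟩

theorem hasFiniteNet_of_norm_le {R : ℝ} (hA : ∀ x ∈ A, E.norm x ≤ R) : E.HasFiniteNet A R :=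
  ⟨{0}, by simpa using E.zero_mem, fun x hx => ⟨0, by simp, by simpa using hA x hx⟩⟩

theorem le_two_mul_of_separated {y : ℕ → ℕ → ℂ} {K : Set ℕ} {δ : ℝ} (hK : K.Infinite)
    (hyA : ∀ k ∈ K, y k ∈ A) (hyE : ∀ k ∈ K, E.Mem (y k))
    (hsep : ∀ k ∈ K, ∀ j ∈ K, k ≠ j → δ ≤ E.norm (y k - y j)) (hnet : E.HasFiniteNet A ε) :
    δ ≤ 2 * ε := by
  obtain ⟨Z, hZE, hZ⟩ := hnet
  choose! φ hφZ hφ using fun k (hk : k ∈ K) => hZ _ (hyA k hk)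
  obtain ⟨k, hk, j, hj, hkj, hφkj⟩ :=
    hK.exists_ne_map_eq_of_mapsTo (fun k hk => Finset.mem_coe.mpr (hφZ k hk)) Z.finite_toSet
  calc δ ≤ E.norm (y k - y j) := hsep k hk j hj hkj
    _ ≤ E.norm (y k - φ k) + E.norm (y j - φ j) := by
      rw [hφkj]; exact E.norm_sub_le_add (hyE k hk) (hyE j hj) (hZE _ (hφZ j hj))
    _ ≤ 2 * ε := by linarith [hφ k hk, hφ j hj]

theorem le_hmnc_of_separated {y : ℕ → ℕ → ℂ} {K : Set ℕ} {δ R : ℝ} (hK : K.Infinite)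
    (hyA : ∀ k ∈ K, y k ∈ A) (hyE : ∀ k ∈ K, E.Mem (y k))
    (hsep : ∀ k ∈ K, ∀ j ∈ K, k ≠ j → δ ≤ E.norm (y k - y j))
    (hR : 0 < R) (hA : E.HasFiniteNet A R) : δ / 2 ≤ hmnc E A :=
  le_csInf ⟨R, hR, hA⟩ fun _ hε => by
    linarith [le_two_mul_of_separated hK hyA hyE hsep hε.2]

end Net

section Diagonal

variable {F E : SeqLattice} {l : ℕ → ℂ} {C₁ C₂ C₃ B : ℝ}

theorem seqMul_mem_and_norm_le (hFE : F.EmbedsInto E C₂) (hC₂ : 0 ≤ C₂)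
    (hB : ∀ n, ‖l n‖ ≤ B) {x : ℕ → ℂ} (hx : x ∈ F.unitBall) :
    E.Mem (seqMul l x) ∧ E.norm (seqMul l x) ≤ B * C₂ := by
  obtain ⟨hxE, hxE'⟩ := hFE x hx.1
  have hB0 : 0 ≤ B := (norm_nonneg _).trans (hB 0)
  obtain ⟨hmem, hnorm⟩ := E.mem_and_norm_le_of_le_mul hB0 hxE (y := seqMul l x) fun n => by
    simpa [seqMul] using mul_le_mul_of_nonneg_right (hB n) (norm_nonneg (x n))
  refine ⟨hmem, hnorm.trans ?_⟩
  gcongr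
  nlinarith [hx.2]

theorem seqMul_sub_truncate_mem_and_norm_le {M : ℝ} (hM0 : 0 ≤ M) {N : ℕ} (hM : ∀ n ≥ N, ‖l n‖ ≤ M)
    {x : ℕ → ℂ} (hx : E.Mem x) :
    E.Mem (seqMul l x - truncate N (seqMul l x)) ∧
      E.norm (seqMul l x - truncate N (seqMul l x)) ≤ M * E.norm x := by
  refine E.mem_and_norm_le_of_le_mul hM0 hx fun n => ?_
  by_cases hn : n < N
  · simpa [truncate, hn] using mul_nonneg hM0 (norm_nonneg (x n))
  · simpa [truncate, hn, seqMul] using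
      mul_le_mul_of_nonneg_right (hM n (not_lt.mp hn)) (norm_nonneg (x n))

theorem hasFiniteNet_seqMul (hF1 : F.L1EmbedsInto C₁) (hC₁ : 0 ≤ C₁)
    (hFE : F.EmbedsInto E C₂) (hC₂ : 0 ≤ C₂) (hEinf : E.EmbedsIntoLinfty C₃) (hC₃ : 0 ≤ C₃)
    (hB : ∀ n, ‖l n‖ ≤ B) {M : ℝ} (hM0 : 0 ≤ M) {N : ℕ} (hM : ∀ n ≥ N, ‖l n‖ ≤ M)
    {ε : ℝ} (hε : 0 < ε) : E.HasFiniteNet (seqMul l '' F.unitBall) (ε + M * C₂) := by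
  have hE1 := hF1.trans hFE hC₂
  have hcoord : ∀ x ∈ F.unitBall, ∀ n, ‖seqMul l x n‖ ≤ B * (C₃ * C₂) := fun x hx n => by
    obtain ⟨hxE, hxE'⟩ := hFE x hx.1
    have hxn : ‖x n‖ ≤ C₃ * C₂ :=
      (hEinf x hxE n).trans (by gcongr; nlinarith [hx.2])
    simpa [seqMul] using mul_le_mul (hB n) hxn (norm_nonneg _) ((norm_nonneg _).trans (hB n))
  obtain ⟨Z, hZE, hZ⟩ := hE1.hasFiniteNet_truncate (by positivity) N (B * (C₃ * C₂)) hε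
  refine ⟨Z, hZE, ?_⟩
  rintro _ ⟨x, hx, rfl⟩
  obtain ⟨z, hzZ, hz⟩ := hZ _ ⟨seqMul l x, hcoord x hx, rfl⟩
  refine ⟨z, hzZ, ?_⟩
  obtain ⟨hxE, hxE'⟩ := hFE x hx.1
  obtain ⟨htail, htail'⟩ := seqMul_sub_truncate_mem_and_norm_le hM0 hM hxE (l := l)
  have hhead := E.sub_mem (hE1.truncate_mem N (x := seqMul l x)) (hZE z hzZ)
  calc E.norm (seqMul l x - z)
        = E.norm ((truncate N (seqMul l x) - z) + (seqMul l x - truncate N (seqMul l x))) := by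
          congr 1; abel
    _ ≤ E.norm (truncate N (seqMul l x) - z) + E.norm (seqMul l x - truncate N (seqMul l x)) :=
          E.norm_add_le _ _ hhead htail
    _ ≤ ε + M * C₂ := by
          gcongr
          exact htail'.trans (by gcongr; nlinarith [hx.2])

theorem limsup_le_hmnc_seqMul (hF1 : F.L1EmbedsInto C₁) (hC₁ : 0 < C₁)
    (hFE : F.EmbedsInto E C₂) (hC₂ : 0 ≤ C₂) (hEinf : E.EmbedsIntoLinfty C₃) (hC₃ : 0 < C₃)
    (hB : ∀ n, ‖l n‖ ≤ B) :
    (4 * C₁ * C₃)⁻¹ * limsup (fun n => ‖l n‖) atTop ≤ hmnc E (seqMul l '' F.unitBall) := by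
  set L := limsup (fun n => ‖l n‖) atTop
  rcases le_or_gt L 0 with hL | hL
  · exact (mul_nonpos_of_nonneg_of_nonpos (by positivity) hL).trans hmnc_nonneg
  set y : ℕ → ℕ → ℂ := fun k => seqMul l ((C₁ : ℂ)⁻¹ • Pi.single k 1)
  have hyA : ∀ k, y k ∈ seqMul l '' F.unitBall := fun k =>
    ⟨_, hF1.smul_single_mem_unitBall hC₁ k, rfl⟩
  have hyE : ∀ k, E.Mem (y k) := fun k =>
    (seqMul_mem_and_norm_le hFE hC₂ hB (hF1.smul_single_mem_unitBall hC₁ k)).1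
  have hK : {k | L / 2 < ‖l k‖}.Infinite := Nat.frequently_atTop_iff_infinite.mp <|
    frequently_lt_of_lt_limsup
      (isBoundedUnder_of ⟨0, fun n => norm_nonneg (l n)⟩).isCoboundedUnder_le (by linarith)
  have hsep : ∀ k ∈ {k | L / 2 < ‖l k‖}, ∀ j ∈ {k | L / 2 < ‖l k‖}, k ≠ j →
      L / (2 * (C₁ * C₃)) ≤ E.norm (y k - y j) := by
    rintro k hk j - hkj
    have hcoord := hEinf _ (E.sub_mem (hyE k) (hyE j)) k
    have hyk : (y k - y j) k = l k * (C₁ : ℂ)⁻¹ := by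
      simp [y, seqMul, hkj]
    rw [hyk, norm_mul, norm_inv, Complex.norm_real, Real.norm_of_nonneg hC₁.le,
      ← div_eq_mul_inv, div_le_iff₀ hC₁] at hcoord
    rw [div_le_iff₀ (by positivity)]
    linarith [hk.out]
  have hB0 : 0 ≤ B := (norm_nonneg _).trans (hB 0)
  have hnet : E.HasFiniteNet (seqMul l '' F.unitBall) (B * C₂ + 1) :=
    hasFiniteNet_of_norm_le fun _ ⟨x, hx, hxy⟩ =>
      hxy ▸ (seqMul_mem_and_norm_le hFE hC₂ hB hx).2.trans (by linarith)
  calc (4 * C₁ * C₃)⁻¹ * L = L / (2 * (C₁ * C₃)) / 2 := by field_simp; ring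
    _ ≤ hmnc E (seqMul l '' F.unitBall) :=
      le_hmnc_of_separated hK (fun k _ => hyA k) (fun k _ => hyE k) hsep (by positivity) hnet

theorem hmnc_seqMul_le_limsup (hF1 : F.L1EmbedsInto C₁) (hC₁ : 0 ≤ C₁)
    (hFE : F.EmbedsInto E C₂) (hC₂ : 0 < C₂) (hEinf : E.EmbedsIntoLinfty C₃) (hC₃ : 0 ≤ C₃)
    (hB : ∀ n, ‖l n‖ ≤ B) :
    hmnc E (seqMul l '' F.unitBall) ≤ C₂ * limsup (fun n => ‖l n‖) atTop := by
  refine le_of_forall_gt_imp_ge_of_dense fun a ha => ?_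
  obtain ⟨N, hN⟩ := eventually_atTop.mp <|
    eventually_lt_of_limsup_lt ((lt_div_iff₀' hC₂).mpr ha) (isBoundedUnder_of ⟨B, hB⟩)
  have hM0 : 0 ≤ a / C₂ := (norm_nonneg _).trans (hN N le_rfl).le
  have ha0 : 0 ≤ a := by simpa [div_mul_cancel₀ _ hC₂.ne'] using mul_nonneg hM0 hC₂.le
  refine le_of_forall_pos_le_add fun ε hε => ?_
  have hnet := hasFiniteNet_seqMul hF1 hC₁ hFE hC₂.le hEinf hC₃ hB hM0
    (fun n hn => (hN n hn).le) hε
  rw [div_mul_cancel₀ _ hC₂.ne'] at hnet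
  exact (hmnc_le (by positivity) hnet).trans (by linarith)

end Diagonal

theorem stmt_12_general (F E : SeqLattice)
    (h1F : ∃ C : ℝ, 0 < C ∧ ∀ x : ℕ → ℂ, Summable (fun n => ‖x n‖) →
      F.Mem x ∧ F.norm x ≤ C * ∑' n, ‖x n‖)
    (hFE : ∃ C : ℝ, 0 < C ∧ ∀ x, F.Mem x → E.Mem x ∧ E.norm x ≤ C * F.norm x)
    (hEinf : ∃ C : ℝ, 0 < C ∧ ∀ x, E.Mem x → ∀ n, ‖x n‖ ≤ C * E.norm x)
    (l : ℕ → ℂ) (hl : BddAbove (Set.range fun n => ‖l n‖)) :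
    ∃ c C : ℝ, 0 < c ∧ 0 < C ∧
      c * Filter.limsup (fun n => ‖l n‖) atTop ≤
        hmnc E ((fun x => seqMul l x) '' {x | F.Mem x ∧ F.norm x ≤ 1}) ∧
      hmnc E ((fun x => seqMul l x) '' {x | F.Mem x ∧ F.norm x ≤ 1}) ≤
        C * Filter.limsup (fun n => ‖l n‖) atTop := by
  obtain ⟨C₁, hC₁, hF1⟩ := h1F
  obtain ⟨C₂, hC₂, hFE⟩ := hFE
  obtain ⟨C₃, hC₃, hEinf⟩ := hEinf
  obtain ⟨B, hB⟩ := hl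
  have hB' : ∀ n, ‖l n‖ ≤ B := fun n => hB ⟨n, rfl⟩
  exact ⟨(4 * C₁ * C₃)⁻¹, C₂, by positivity, hC₂,
    limsup_le_hmnc_seqMul hF1 hC₁ hFE hC₂.le hEinf hC₃ hB',
    hmnc_seqMul_le_limsup hF1 hC₁.le hFE hC₂ hEinf hC₃.le hB'⟩

/-- If `ℓ_1 ↪ F ↪ E ↪ ℓ_∞` are order-continuous Banach sequence lattices and `λ ∈ ℓ_∞`,
then `β(D_λ : F → E) = limsup_n |λ_n|` up to constants coming from the embeddings. -/
theorem stmt_12 (F E : SeqLattice) (hF : OrderContinuous F) (hE : OrderContinuous E)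
    (h1F : ∃ C : ℝ, 0 < C ∧ ∀ x : ℕ → ℂ, Summable (fun n => ‖x n‖) →
      F.Mem x ∧ F.norm x ≤ C * ∑' n, ‖x n‖)
    (hFE : ∃ C : ℝ, 0 < C ∧ ∀ x, F.Mem x → E.Mem x ∧ E.norm x ≤ C * F.norm x)
    (hEinf : ∃ C : ℝ, 0 < C ∧ ∀ x, E.Mem x → ∀ n, ‖x n‖ ≤ C * E.norm x)
    (l : ℕ → ℂ) (hl : BddAbove (Set.range fun n => ‖l n‖)) :
    ∃ c C : ℝ, 0 < c ∧ 0 < C ∧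
      c * Filter.limsup (fun n => ‖l n‖) atTop ≤
        hmnc E ((fun x => seqMul l x) '' {x | F.Mem x ∧ F.norm x ≤ 1}) ∧
      hmnc E ((fun x => seqMul l x) '' {x | F.Mem x ∧ F.norm x ≤ 1}) ≤
        C * Filter.limsup (fun n => ‖l n‖) atTop :=
  stmt_12_general F E h1F hFE hEinf l hl
end
end

section
/- Every bounded linear operator from ℓ_p to ℓ_q with 1 ≤ q < p < ∞ is compact (Pitt's theorem). -/
open MeasureTheory Complex Filter Topology Set
open scoped ENNReal

noncomputable section

namespace Pitt
noncomputable section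

abbrev Lp (r : ℝ≥0∞) := lp (fun _ : ℕ => ℂ) r
variable {r : ℝ≥0∞}

def tailSum (R : ℝ) (f : ℕ → ℂ) (K : ℕ) : ℝ := ∑' k, ‖f (k + K)‖ ^ R
def headSum (R : ℝ) (f : ℕ → ℂ) (K : ℕ) : ℝ := ∑ k ∈ Finset.range K, ‖f k‖ ^ R

lemma summable_lp (hr : 0 < r.toReal) (f : Lp r) :
    Summable fun k => ‖f k‖ ^ r.toReal := (lp.memℓp f).summable hr

lemma head_add_tail (hr : 0 < r.toReal) (f : Lp r) (K : ℕ) :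
    headSum r.toReal (⇑f) K + tailSum r.toReal (⇑f) K = ‖f‖ ^ r.toReal := by
  rw [lp.norm_rpow_eq_tsum hr]
  exact Summable.sum_add_tsum_nat_add K (summable_lp hr f)

def truncFun (a b : ℕ) (f : ℕ → ℂ) : ℕ → ℂ := fun k => if a ≤ k ∧ k < b then f k else 0

lemma truncFun_norm_le (a b : ℕ) (f : ℕ → ℂ) (k : ℕ) : ‖truncFun a b f k‖ ≤ ‖f k‖ := by
  unfold truncFun; split <;> simp [norm_nonneg]

lemma truncFun_rpow_le {R : ℝ} (hR : 0 < R) (a b : ℕ) (f : ℕ → ℂ) (k : ℕ) :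
    ‖truncFun a b f k‖ ^ R ≤ ‖f k‖ ^ R :=
  Real.rpow_le_rpow (norm_nonneg _) (truncFun_norm_le a b f k) hR.le

def truncLp (hr : 0 < r.toReal) (f : Lp r) (a b : ℕ) : Lp r :=
  ⟨truncFun a b (⇑f), memℓp_gen <| by
    apply (summable_lp hr f).of_nonneg_of_le (fun k => by positivity)
    intro k
    exact Real.rpow_le_rpow (norm_nonneg _) (truncFun_norm_le a b (⇑f) k) hr.le⟩

@[simp] lemma truncLp_coe (hr : 0 < r.toReal) (f : Lp r) (a b : ℕ) :
    ⇑(truncLp hr f a b) = truncFun a b (⇑f) := rfl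

lemma norm_sub_trunc_rpow_le (hr : 0 < r.toReal) (f : Lp r) (a b : ℕ) :
    ‖f - truncLp hr f a b‖ ^ r.toReal ≤ headSum r.toReal (⇑f) a + tailSum r.toReal (⇑f) b := by
  set R := r.toReal with hR
  have hsf := summable_lp hr f
  set h1 : ℕ → ℝ := fun k => if k < a then ‖f k‖ ^ R else 0 with hh1
  set h2 : ℕ → ℝ := fun k => if b ≤ k then ‖f k‖ ^ R else 0 with hh2
  have h1nn : ∀ k, 0 ≤ h1 k := fun k => by simp only [hh1]; split <;> positivity
  have h2nn : ∀ k, 0 ≤ h2 k := fun k => by simp only [hh2]; split <;> positivity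
  have h1s : Summable h1 := hsf.of_nonneg_of_le h1nn fun k => by
    simp only [hh1]; split
    · exact le_refl _
    · positivity
  have h2s : Summable h2 := hsf.of_nonneg_of_le h2nn fun k => by
    simp only [hh2]; split
    · exact le_refl _
    · positivity
  have key : ∀ k, ‖(f - truncLp hr f a b) k‖ ^ R ≤ h1 k + h2 k := by
    intro k
    have hcoe : (f - truncLp hr f a b) k = f k - truncFun a b (⇑f) k := by
      rw [lp.coeFn_sub]; rfl
    rw [hcoe]
    unfold truncFun
    by_cases hk : a ≤ k ∧ k < b
    · rw [if_pos hk]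
      simp only [sub_self, norm_zero, Real.zero_rpow hr.ne']
      exact add_nonneg (h1nn k) (h2nn k)
    · rw [if_neg hk, sub_zero]
      rcases not_and_or.1 hk with h | h
      · have hka : k < a := not_le.1 h
        have e1 : h1 k = ‖f k‖ ^ R := if_pos hka
        linarith [h2nn k]
      · have hkb : b ≤ k := not_lt.1 h
        have e2 : h2 k = ‖f k‖ ^ R := if_pos hkb
        linarith [h1nn k]
  have hsum1 : ∑' k, h1 k = headSum R (⇑f) a := by
    rw [headSum, tsum_eq_sum (s := Finset.range a) (f := h1) ?_]
    · exact Finset.sum_congr rfl fun k hk => by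
        simp only [hh1, if_pos (Finset.mem_range.mp hk)]
    · intro k hk
      have : ¬ k < a := fun h => hk (Finset.mem_range.mpr h)
      simp only [hh1, if_neg this]
  have hsum2 : ∑' k, h2 k = tailSum R (⇑f) b := by
    have := (Summable.sum_add_tsum_nat_add (f := h2) b h2s).symm
    have hz : ∑ k ∈ Finset.range b, h2 k = 0 := by
      apply Finset.sum_eq_zero
      intro k hk
      simp only [hh2, if_neg (not_le.2 (Finset.mem_range.mp hk))]
    have he : ∀ k : ℕ, h2 (k + b) = ‖f (k + b)‖ ^ R := fun k => by
      simp only [hh2, if_pos (Nat.le_add_left b k)]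
    rw [tailSum]
    rw [hz, zero_add] at this
    rw [this]
    exact tsum_congr fun k => he k
  calc ‖f - truncLp hr f a b‖ ^ R = ∑' k, ‖(f - truncLp hr f a b) k‖ ^ R :=
        lp.norm_rpow_eq_tsum hr _
    _ ≤ ∑' k, (h1 k + h2 k) :=
        Summable.tsum_le_tsum key (summable_lp hr _) (h1s.add h2s)
    _ = ∑' k, h1 k + ∑' k, h2 k := Summable.tsum_add h1s h2s
    _ = headSum R (⇑f) a + tailSum R (⇑f) b := by rw [hsum1, hsum2]


section blocks
variable (hr : 0 < r.toReal) {K : ℕ → ℕ} (v : ℕ → Lp r) (N : ℕ)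

lemma sum_trunc_apply_eq (hK : StrictMono K) {j k : ℕ} (hjN : j ∈ Finset.range N)
    (h1 : K j ≤ k) (h2 : k < K (j + 1)) :
    (∑ j' ∈ Finset.range N, truncLp hr (v j') (K j') (K (j' + 1))) k = v j k := by
  rw [lp.coeFn_sum, Finset.sum_apply]
  rw [Finset.sum_eq_single_of_mem j hjN]
  · simp only [truncLp_coe, truncFun]
    rw [if_pos (show K j ≤ k ∧ k < K (j + 1) from ⟨h1, h2⟩)]
  · intro j' _ hj'
    simp only [truncLp_coe, truncFun]
    rw [if_neg]
    rintro ⟨ha, hb⟩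
    rcases lt_or_gt_of_ne hj' with h | h
    · exact absurd (le_trans (hK.monotone (Nat.succ_le_of_lt h)) h1) (not_le.2 hb)
    · exact absurd (le_trans (hK.monotone (Nat.succ_le_of_lt h)) ha) (not_le.2 h2)

lemma sum_trunc_apply_eq_zero {k : ℕ}
    (h : ∀ j ∈ Finset.range N, ¬(K j ≤ k ∧ k < K (j + 1))) :
    (∑ j' ∈ Finset.range N, truncLp hr (v j') (K j') (K (j' + 1))) k = 0 := by
  rw [lp.coeFn_sum, Finset.sum_apply]
  apply Finset.sum_eq_zero
  intro j hj
  simp only [truncLp_coe, truncFun, if_neg (h j hj)]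

/-- Lemma B : upper bound. -/
lemma norm_sum_trunc_rpow_le (hK : StrictMono K) :
    ‖∑ j ∈ Finset.range N, truncLp hr (v j) (K j) (K (j + 1))‖ ^ r.toReal
      ≤ ∑ j ∈ Finset.range N, ‖v j‖ ^ r.toReal := by
  set R := r.toReal with hRdef
  set S := ∑ j ∈ Finset.range N, truncLp hr (v j) (K j) (K (j + 1)) with hS
  set G : ℕ → ℝ := fun k => ∑ j ∈ Finset.range N, ‖truncFun (K j) (K (j + 1)) (⇑(v j)) k‖ ^ R
    with hG
  have hGsum : Summable G := by
    apply summable_sum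
    intro j _
    exact (summable_lp hr (v j)).of_nonneg_of_le (fun k => by positivity)
      (fun k => truncFun_rpow_le hr _ _ _ _)
  have key : ∀ k, ‖S k‖ ^ R ≤ G k := by
    intro k
    by_cases hex : ∃ j ∈ Finset.range N, K j ≤ k ∧ k < K (j + 1)
    · obtain ⟨j, hjN, h1, h2⟩ := hex
      rw [sum_trunc_apply_eq hr v N hK hjN h1 h2]
      have : ‖(v j) k‖ ^ R = ‖truncFun (K j) (K (j + 1)) (⇑(v j)) k‖ ^ R := by
        simp only [truncFun]
        rw [if_pos (show K j ≤ k ∧ k < K (j + 1) from ⟨h1, h2⟩)]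
      rw [this]
      exact Finset.single_le_sum (f := fun j' => ‖truncFun (K j') (K (j' + 1)) (⇑(v j')) k‖ ^ R)
        (fun j' _ => by positivity) hjN
    · push_neg at hex
      rw [sum_trunc_apply_eq_zero hr v N
        (fun j hj h => absurd (hex j hj h.1) (not_le.2 h.2))]
      simp only [norm_zero, Real.zero_rpow hr.ne']
      exact Finset.sum_nonneg fun j _ => by positivity
  calc ‖S‖ ^ R = ∑' k, ‖S k‖ ^ R := lp.norm_rpow_eq_tsum hr S
    _ ≤ ∑' k, G k := Summable.tsum_le_tsum key (summable_lp hr S) hGsum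
    _ = ∑ j ∈ Finset.range N, ∑' k, ‖truncFun (K j) (K (j + 1)) (⇑(v j)) k‖ ^ R := by
        rw [hG]; exact Summable.tsum_finsetSum fun j _ => (summable_lp hr (v j)).of_nonneg_of_le
          (fun k => by positivity) (fun k => truncFun_rpow_le hr _ _ _ _)
    _ ≤ ∑ j ∈ Finset.range N, ‖v j‖ ^ R := by
        apply Finset.sum_le_sum
        intro j _
        rw [lp.norm_rpow_eq_tsum hr (v j)]
        exact Summable.tsum_le_tsum (fun k => truncFun_rpow_le hr _ _ _ _)
          ((summable_lp hr (v j)).of_nonneg_of_le (fun k => by positivity)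
            (fun k => truncFun_rpow_le hr _ _ _ _)) (summable_lp hr (v j))

lemma headSum_nonneg (R : ℝ) (f : ℕ → ℂ) (K : ℕ) : 0 ≤ headSum R f K :=
  Finset.sum_nonneg fun _ _ => Real.rpow_nonneg (norm_nonneg _) _

lemma tailSum_nonneg (R : ℝ) (f : ℕ → ℂ) (K : ℕ) : 0 ≤ tailSum R f K :=
  tsum_nonneg fun _ => Real.rpow_nonneg (norm_nonneg _) _

/-- Lemma C : lower bound. -/
lemma sum_block_le_norm_sum_trunc (hK : StrictMono K) :
    ∑ j ∈ Finset.range N,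
        (‖v j‖ ^ r.toReal - headSum r.toReal (⇑(v j)) (K j)
          - tailSum r.toReal (⇑(v j)) (K (j + 1)))
      ≤ ‖∑ j ∈ Finset.range N, truncLp hr (v j) (K j) (K (j + 1))‖ ^ r.toReal := by
  set R := r.toReal with hRdef
  set S := ∑ j ∈ Finset.range N, truncLp hr (v j) (K j) (K (j + 1)) with hS
  have hstep : ∀ j ∈ Finset.range N,
      ‖v j‖ ^ R - headSum R (⇑(v j)) (K j) - tailSum R (⇑(v j)) (K (j + 1))
        = ∑ k ∈ Finset.Ico (K j) (K (j + 1)), ‖S k‖ ^ R := by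
    intro j hj
    have h1 : headSum R (⇑(v j)) (K (j + 1)) + tailSum R (⇑(v j)) (K (j + 1)) = ‖v j‖ ^ R :=
      head_add_tail hr (v j) (K (j + 1))
    have h2 : ∑ k ∈ Finset.Ico (K j) (K (j + 1)), ‖(v j) k‖ ^ R
        = headSum R (⇑(v j)) (K (j + 1)) - headSum R (⇑(v j)) (K j) := by
      rw [headSum, headSum, Finset.sum_Ico_eq_sub _ (hK.monotone (Nat.le_succ j))]
    have h3 : ∀ k ∈ Finset.Ico (K j) (K (j + 1)), ‖S k‖ ^ R = ‖(v j) k‖ ^ R := by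
      intro k hk
      rw [Finset.mem_Ico] at hk
      rw [hS, sum_trunc_apply_eq hr v N hK hj hk.1 hk.2]
    rw [Finset.sum_congr rfl h3, h2]
    linarith
  rw [Finset.sum_congr rfl hstep]
  have hunion : ∀ M : ℕ, ∑ j ∈ Finset.range M, ∑ k ∈ Finset.Ico (K j) (K (j + 1)), ‖S k‖ ^ R
      = ∑ k ∈ Finset.Ico (K 0) (K M), ‖S k‖ ^ R := by
    intro M
    induction M with
    | zero => simp
    | succ M ih =>
      rw [Finset.sum_range_succ, ih,
        Finset.sum_Ico_consecutive _ (hK.monotone (Nat.zero_le M)) (hK.monotone (Nat.le_succ M))]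
  rw [hunion]
  rw [lp.norm_rpow_eq_tsum hr S]
  exact Summable.sum_le_tsum _ (fun k _ => by positivity) (summable_lp hr S)

end blocks

lemma tail_tendsto (hr : 0 < r.toReal) (f : Lp r) :
    Tendsto (fun K => tailSum r.toReal (⇑f) K) atTop (𝓝 0) := by
  have hs := summable_lp hr f
  have h1 : Tendsto (fun K => headSum r.toReal (⇑f) K) atTop (𝓝 (‖f‖ ^ r.toReal)) := by
    have := hs.hasSum.tendsto_sum_nat
    rwa [← lp.norm_rpow_eq_tsum hr] at this
  have h2 : ∀ K, tailSum r.toReal (⇑f) K = ‖f‖ ^ r.toReal - headSum r.toReal (⇑f) K := by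
    intro K; have := head_add_tail hr f K; linarith
  simp only [h2]
  have := h1.const_sub (‖f‖ ^ r.toReal)
  simpa using this

lemma headSum_tendsto {R : ℝ} (hR : 0 < R) (x : ℕ → ℕ → ℂ)
    (h : ∀ k, Tendsto (fun n => x n k) atTop (𝓝 0)) (b : ℕ) :
    Tendsto (fun n => headSum R (x n) b) atTop (𝓝 0) := by
  have key : ∀ k, Tendsto (fun n => ‖x n k‖ ^ R) atTop (𝓝 0) := by
    intro k
    have h1 : Tendsto (fun n => ‖x n k‖) atTop (𝓝 0) := by
      simpa using (h k).norm
    have := h1.rpow_const (p := R) (Or.inr hR.le)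
    simpa [Real.zero_rpow hR.ne'] using this
  unfold headSum
  have := tendsto_finset_sum (Finset.range b) (fun k (_ : k ∈ Finset.range b) => key k)
  simpa using this

lemma le_root {R x y : ℝ} (hR : 0 < R) (hx : 0 ≤ x) (h : x ^ R ≤ y) : x ≤ y ^ (1/R) := by
  calc x = (x ^ R) ^ (1/R) := by
        rw [one_div, Real.rpow_rpow_inv hx hR.ne']
    _ ≤ y ^ (1/R) := Real.rpow_le_rpow (Real.rpow_nonneg hx _) h (by positivity)

lemma root_le {R x y : ℝ} (hR : 0 < R) (hx : 0 ≤ x) (hy : 0 ≤ y) (h : y ≤ x ^ R) :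
    y ^ (1/R) ≤ x := by
  calc y ^ (1/R) ≤ (x ^ R) ^ (1/R) := Real.rpow_le_rpow hy h (by positivity)
    _ = x := by rw [one_div, Real.rpow_rpow_inv hx hR.ne']

lemma exists_next {p q : ℝ≥0∞} (hp : 0 < p.toReal) (hq : 0 < q.toReal)
    (u : ℕ → Lp p) (w : ℕ → Lp q)
    (hu0 : ∀ k, Tendsto (fun n => (u n : ℕ → ℂ) k) atTop (𝓝 0))
    (hw0 : ∀ k, Tendsto (fun n => (w n : ℕ → ℂ) k) atTop (𝓝 0))
    {η : ℝ} (hη : 0 < η) (b : ℕ) :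
    ∃ n K : ℕ, b < K ∧
      headSum p.toReal (⇑(u n)) b ≤ η ∧ headSum q.toReal (⇑(w n)) b ≤ η ∧
      tailSum p.toReal (⇑(u n)) K ≤ η ∧ tailSum q.toReal (⇑(w n)) K ≤ η := by
  have e1 := (headSum_tendsto hp (fun n => ⇑(u n)) hu0 b).eventually_le_const hη
  have e2 := (headSum_tendsto hq (fun n => ⇑(w n)) hw0 b).eventually_le_const hη
  obtain ⟨n, hn1, hn2⟩ := (e1.and e2).exists
  have e3 := (tail_tendsto hp (u n)).eventually_le_const hη
  have e4 := (tail_tendsto hq (w n)).eventually_le_const hη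
  obtain ⟨K, hK1, hK2, hK3⟩ := ((eventually_gt_atTop b).and (e3.and e4)).exists
  exact ⟨n, K, hK1, hn1, hn2, hK2, hK3⟩

set_option maxHeartbeats 2000000 in
lemma glide {p q : ℝ≥0∞} [Fact (1 ≤ p)] [Fact (1 ≤ q)]
    (hp : 0 < p.toReal) (hq : 0 < q.toReal) (hpq : q.toReal < p.toReal)
    (T : Lp p →L[ℂ] Lp q) {M δ : ℝ} (hδ : 0 < δ)
    (u : ℕ → Lp p) (hM : ∀ n, ‖u n‖ ≤ M)
    (hu0 : ∀ k, Tendsto (fun n => (u n : ℕ → ℂ) k) atTop (𝓝 0))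
    (hw0 : ∀ k, Tendsto (fun n => (T (u n) : ℕ → ℂ) k) atTop (𝓝 0))
    (hδle : ∀ n, δ ≤ ‖T (u n)‖) : False := by
  set P := p.toReal with hPdef
  set Q := q.toReal with hQdef
  have hTnn : (0:ℝ) ≤ ‖T‖ := norm_nonneg _
  have hM0 : 0 ≤ M := le_trans (norm_nonneg _) (hM 0)
  have main : ∀ N : ℕ, (δ ^ Q / 2) ^ (1/Q) * (N : ℝ) ^ (1/Q)
      ≤ ‖T‖ * M * (N : ℝ) ^ (1/P) + 2 := by
    intro N
    set ε : ℝ := 1 / ((N : ℝ) * (‖T‖ + 1) + 1) with hεdef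
    have hden : (0:ℝ) < (N : ℝ) * (‖T‖ + 1) + 1 := by positivity
    have hε : 0 < ε := by positivity
    set η : ℝ := (1/2) * min (δ ^ Q / 2) (min (ε ^ Q) (ε ^ P)) with hηdef
    have hη : 0 < η := by
      have h1 : (0:ℝ) < δ ^ Q / 2 := by positivity
      have h2 : (0:ℝ) < ε ^ Q := by positivity
      have h3 : (0:ℝ) < ε ^ P := by positivity
      have := lt_min h1 (lt_min h2 h3)
      rw [hηdef]; positivity
    have hη1 : 2 * η ≤ δ ^ Q / 2 := by
      have := min_le_left (δ ^ Q / 2) (min (ε ^ Q) (ε ^ P)); rw [hηdef]; linarith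
    have hη2 : 2 * η ≤ ε ^ Q := by
      have h1 := min_le_right (δ ^ Q / 2) (min (ε ^ Q) (ε ^ P))
      have h2 := min_le_left (ε ^ Q) (ε ^ P)
      rw [hηdef]; linarith
    have hη3 : 2 * η ≤ ε ^ P := by
      have h1 := min_le_right (δ ^ Q / 2) (min (ε ^ Q) (ε ^ P))
      have h2 := min_le_right (ε ^ Q) (ε ^ P)
      rw [hηdef]; linarith
    -- construct the blocks
    choose nn KK hKK hh1 hh2 ht1 ht2 using
      fun pr : ℕ × ℕ => exists_next hp hq u (fun n => T (u n)) hu0 hw0 hη pr.2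
    set F : ℕ × ℕ → ℕ × ℕ := fun pr => (nn pr, KK pr) with hFdef
    set g : ℕ → ℕ × ℕ := fun j => F^[j] (0, 0) with hgdef
    have hgsucc : ∀ j, g (j + 1) = F (g j) := fun j => Function.iterate_succ_apply' F j (0, 0)
    set K : ℕ → ℕ := fun j => (g j).2 with hKdef
    set vj : ℕ → Lp p := fun j => u ((g (j + 1)).1) with hvdef
    set wj : ℕ → Lp q := fun j => T (u ((g (j + 1)).1)) with hwdef
    have hKmono : StrictMono K := by
      apply strictMono_nat_of_lt_succ
      intro j
      have h := hKK (g j)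
      simp only [hKdef]
      rw [hgsucc j]
      exact h
    have hhead1 : ∀ j, headSum P (⇑(vj j)) (K j) ≤ η := by
      intro j
      have h := hh1 (g j)
      simp only [hvdef, hKdef]
      rw [hgsucc j]
      exact h
    have hhead2 : ∀ j, headSum Q (⇑(wj j)) (K j) ≤ η := by
      intro j
      have h := hh2 (g j)
      simp only [hwdef, hKdef]
      rw [hgsucc j]
      exact h
    have htail1 : ∀ j, tailSum P (⇑(vj j)) (K (j + 1)) ≤ η := by
      intro j
      have h := ht1 (g j)
      simp only [hvdef, hKdef]
      rw [hgsucc j]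
      exact h
    have htail2 : ∀ j, tailSum Q (⇑(wj j)) (K (j + 1)) ≤ η := by
      intro j
      have h := ht2 (g j)
      simp only [hwdef, hKdef]
      rw [hgsucc j]
      exact h
    -- the test vector and its image
    set s : Lp p := ∑ j ∈ Finset.range N, vj j with hsdef
    set Sv : Lp p := ∑ j ∈ Finset.range N, truncLp hp (vj j) (K j) (K (j + 1)) with hSvdef
    set Sw : Lp q := ∑ j ∈ Finset.range N, truncLp hq (wj j) (K j) (K (j + 1)) with hSwdef
    have hTs : T s = ∑ j ∈ Finset.range N, wj j := by
      rw [hsdef, map_sum]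
    -- upper bound for ‖Sv‖
    have hSv_norm : ‖Sv‖ ≤ (N : ℝ) ^ (1/P) * M := by
      have h1 : ‖Sv‖ ^ P ≤ (N : ℝ) * M ^ P := by
        calc ‖Sv‖ ^ P ≤ ∑ j ∈ Finset.range N, ‖vj j‖ ^ P :=
              norm_sum_trunc_rpow_le hp vj N hKmono
          _ ≤ ∑ _j ∈ Finset.range N, M ^ P :=
              Finset.sum_le_sum fun j _ => Real.rpow_le_rpow (norm_nonneg _) (hM _) hp.le
          _ = (N : ℝ) * M ^ P := by
              rw [Finset.sum_const, Finset.card_range, nsmul_eq_mul]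
      have h2 := le_root hp (norm_nonneg Sv) h1
      calc ‖Sv‖ ≤ ((N : ℝ) * M ^ P) ^ (1/P) := h2
        _ = (N : ℝ) ^ (1/P) * M := by
            rw [Real.mul_rpow (Nat.cast_nonneg N) (Real.rpow_nonneg hM0 _), one_div,
              Real.rpow_rpow_inv hM0 hp.ne']
    -- difference bounds
    have hdv : ∀ j ∈ Finset.range N,
        ‖vj j - truncLp hp (vj j) (K j) (K (j + 1))‖ ≤ (2 * η) ^ (1/P) := by
      intro j _
      apply le_root hp (norm_nonneg _)
      calc ‖vj j - truncLp hp (vj j) (K j) (K (j + 1))‖ ^ P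
          ≤ headSum P (⇑(vj j)) (K j) + tailSum P (⇑(vj j)) (K (j + 1)) :=
            norm_sub_trunc_rpow_le hp (vj j) _ _
        _ ≤ 2 * η := by have := hhead1 j; have := htail1 j; linarith
    have hdw : ∀ j ∈ Finset.range N,
        ‖wj j - truncLp hq (wj j) (K j) (K (j + 1))‖ ≤ (2 * η) ^ (1/Q) := by
      intro j _
      apply le_root hq (norm_nonneg _)
      calc ‖wj j - truncLp hq (wj j) (K j) (K (j + 1))‖ ^ Q
          ≤ headSum Q (⇑(wj j)) (K j) + tailSum Q (⇑(wj j)) (K (j + 1)) :=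
            norm_sub_trunc_rpow_le hq (wj j) _ _
        _ ≤ 2 * η := by have := hhead2 j; have := htail2 j; linarith
    have hsSv : ‖s - Sv‖ ≤ (N : ℝ) * (2 * η) ^ (1/P) := by
      have he : s - Sv = ∑ j ∈ Finset.range N,
          (vj j - truncLp hp (vj j) (K j) (K (j + 1))) := by
        rw [hsdef, hSvdef, Finset.sum_sub_distrib]
      rw [he]
      calc ‖∑ j ∈ Finset.range N, (vj j - truncLp hp (vj j) (K j) (K (j + 1)))‖
          ≤ ∑ j ∈ Finset.range N, ‖vj j - truncLp hp (vj j) (K j) (K (j + 1))‖ :=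
            norm_sum_le _ _
        _ ≤ ∑ _j ∈ Finset.range N, (2 * η) ^ (1/P) := Finset.sum_le_sum hdv
        _ = (N : ℝ) * (2 * η) ^ (1/P) := by
            rw [Finset.sum_const, Finset.card_range, nsmul_eq_mul]
    have hTsSw : ‖T s - Sw‖ ≤ (N : ℝ) * (2 * η) ^ (1/Q) := by
      have he : T s - Sw = ∑ j ∈ Finset.range N,
          (wj j - truncLp hq (wj j) (K j) (K (j + 1))) := by
        rw [hTs, hSwdef, Finset.sum_sub_distrib]
      rw [he]
      calc ‖∑ j ∈ Finset.range N, (wj j - truncLp hq (wj j) (K j) (K (j + 1)))‖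
          ≤ ∑ j ∈ Finset.range N, ‖wj j - truncLp hq (wj j) (K j) (K (j + 1))‖ :=
            norm_sum_le _ _
        _ ≤ ∑ _j ∈ Finset.range N, (2 * η) ^ (1/Q) := Finset.sum_le_sum hdw
        _ = (N : ℝ) * (2 * η) ^ (1/Q) := by
            rw [Finset.sum_const, Finset.card_range, nsmul_eq_mul]
    -- lower bound for ‖Sw‖
    have hSw_low : (N : ℝ) * (δ ^ Q / 2) ≤ ‖Sw‖ ^ Q := by
      have h1 : ∑ j ∈ Finset.range N,
          (‖wj j‖ ^ Q - headSum Q (⇑(wj j)) (K j) - tailSum Q (⇑(wj j)) (K (j + 1)))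
            ≤ ‖Sw‖ ^ Q := sum_block_le_norm_sum_trunc hq wj N hKmono
      have h2 : ∀ j ∈ Finset.range N, δ ^ Q / 2
          ≤ ‖wj j‖ ^ Q - headSum Q (⇑(wj j)) (K j) - tailSum Q (⇑(wj j)) (K (j + 1)) := by
        intro j _
        have h3 : δ ^ Q ≤ ‖wj j‖ ^ Q :=
          Real.rpow_le_rpow hδ.le (hδle _) hq.le
        have := hhead2 j; have := htail2 j
        linarith
      calc (N : ℝ) * (δ ^ Q / 2) = ∑ _j ∈ Finset.range N, (δ ^ Q / 2) := by
            rw [Finset.sum_const, Finset.card_range, nsmul_eq_mul]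
        _ ≤ ∑ j ∈ Finset.range N,
            (‖wj j‖ ^ Q - headSum Q (⇑(wj j)) (K j) - tailSum Q (⇑(wj j)) (K (j + 1))) :=
            Finset.sum_le_sum h2
        _ ≤ ‖Sw‖ ^ Q := h1
    have hSw_norm : (N : ℝ) ^ (1/Q) * (δ ^ Q / 2) ^ (1/Q) ≤ ‖Sw‖ := by
      have h0 : (0:ℝ) ≤ (N : ℝ) * (δ ^ Q / 2) := by positivity
      have := root_le hq (norm_nonneg Sw) h0 hSw_low
      calc (N : ℝ) ^ (1/Q) * (δ ^ Q / 2) ^ (1/Q)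
          = ((N : ℝ) * (δ ^ Q / 2)) ^ (1/Q) := by
            rw [Real.mul_rpow (Nat.cast_nonneg N) (by positivity)]
        _ ≤ ‖Sw‖ := this
    -- quantitative smallness
    have h2ηQ : (2 * η) ^ (1/Q) ≤ ε := by
      have := root_le hq hε.le (by positivity : (0:ℝ) ≤ 2 * η) hη2
      exact this
    have h2ηP : (2 * η) ^ (1/P) ≤ ε := root_le hp hε.le (by positivity) hη3
    have hNε : (N : ℝ) * ε ≤ 1 := by
      rw [hεdef, mul_one_div, div_le_one hden]
      nlinarith [Nat.cast_nonneg (α := ℝ) N, hTnn]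
    have hTNε : ‖T‖ * ((N : ℝ) * ε) ≤ 1 := by
      rw [hεdef, mul_one_div, mul_div_assoc', div_le_one hden]
      nlinarith [Nat.cast_nonneg (α := ℝ) N, hTnn]
    have hNQ : (N : ℝ) * (2 * η) ^ (1/Q) ≤ 1 := by
      have : (N : ℝ) * (2 * η) ^ (1/Q) ≤ (N : ℝ) * ε :=
        mul_le_mul_of_nonneg_left h2ηQ (Nat.cast_nonneg N)
      linarith
    have hNP : ‖T‖ * ((N : ℝ) * (2 * η) ^ (1/P)) ≤ 1 := by
      have h1 : (N : ℝ) * (2 * η) ^ (1/P) ≤ (N : ℝ) * ε :=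
        mul_le_mul_of_nonneg_left h2ηP (Nat.cast_nonneg N)
      have h2 : ‖T‖ * ((N : ℝ) * (2 * η) ^ (1/P)) ≤ ‖T‖ * ((N : ℝ) * ε) :=
        mul_le_mul_of_nonneg_left h1 hTnn
      linarith
    -- put it together
    have hTs_up : ‖T s‖ ≤ ‖T‖ * ‖s‖ := T.le_opNorm s
    have hs_up : ‖s‖ ≤ (N : ℝ) ^ (1/P) * M + (N : ℝ) * (2 * η) ^ (1/P) := by
      have h1 : ‖s‖ ≤ ‖Sv‖ + ‖s - Sv‖ := by
        have : s = Sv + (s - Sv) := by abel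
        calc ‖s‖ = ‖Sv + (s - Sv)‖ := by rw [← this]
          _ ≤ ‖Sv‖ + ‖s - Sv‖ := norm_add_le _ _
      linarith
    have hTs_low : (N : ℝ) ^ (1/Q) * (δ ^ Q / 2) ^ (1/Q) - 1 ≤ ‖T s‖ := by
      have h1 : ‖Sw‖ ≤ ‖T s‖ + ‖T s - Sw‖ := by
        have : Sw = T s - (T s - Sw) := by abel
        calc ‖Sw‖ = ‖T s - (T s - Sw)‖ := by rw [← this]
          _ ≤ ‖T s‖ + ‖T s - Sw‖ := norm_sub_le _ _
      linarith
    have hfinal : ‖T‖ * ‖s‖ ≤ ‖T‖ * M * (N : ℝ) ^ (1/P) + 1 := by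
      have h1 : ‖T‖ * ‖s‖ ≤ ‖T‖ * ((N : ℝ) ^ (1/P) * M + (N : ℝ) * (2 * η) ^ (1/P)) :=
        mul_le_mul_of_nonneg_left hs_up hTnn
      have h2 : ‖T‖ * ((N : ℝ) ^ (1/P) * M + (N : ℝ) * (2 * η) ^ (1/P))
          = ‖T‖ * M * (N : ℝ) ^ (1/P) + ‖T‖ * ((N : ℝ) * (2 * η) ^ (1/P)) := by ring
      linarith
    have := hTs_low.trans (hTs_up.trans hfinal)
    linarith [this]
  -- derive the contradiction
  set c : ℝ := (δ ^ Q / 2) ^ (1/Q) with hcdef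
  have hc : 0 < c := by rw [hcdef]; positivity
  set D : ℝ := ‖T‖ * M with hDdef
  have hD : 0 ≤ D := mul_nonneg hTnn hM0
  have he : 0 < 1/Q - 1/P := by
    have := one_div_lt_one_div_of_lt hq hpq
    linarith
  have key : ∀ N : ℕ, 1 ≤ N → c * (N : ℝ) ^ (1/Q - 1/P) ≤ D + 2 := by
    intro N hN
    have hN1 : (1:ℝ) ≤ (N : ℝ) := by exact_mod_cast hN
    have hNpos : (0:ℝ) < (N : ℝ) := by linarith
    have h1 : (N : ℝ) ^ (1/Q) = (N : ℝ) ^ (1/Q - 1/P) * (N : ℝ) ^ (1/P) := by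
      rw [← Real.rpow_add hNpos]; ring_nf
    have h2 : (1:ℝ) ≤ (N : ℝ) ^ (1/P) := by
      calc (1:ℝ) = (1:ℝ) ^ (1/P) := (Real.one_rpow _).symm
        _ ≤ (N : ℝ) ^ (1/P) := Real.rpow_le_rpow zero_le_one hN1 (by positivity)
    have h3 := main N
    rw [h1] at h3
    have h5 : (0:ℝ) < (N : ℝ) ^ (1/P) := by positivity
    have h4 : c * (N : ℝ) ^ (1/Q - 1/P) * (N : ℝ) ^ (1/P) ≤ (D + 2) * (N : ℝ) ^ (1/P) := by
      nlinarith [h3, h2, h5]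
    exact le_of_mul_le_mul_right h4 h5
  have htend : Tendsto (fun N : ℕ => c * ((N : ℝ) ^ (1/Q - 1/P))) atTop atTop := by
    have h1 : Tendsto (fun x : ℝ => x ^ (1/Q - 1/P)) atTop atTop := tendsto_rpow_atTop he
    have h2 : Tendsto (fun N : ℕ => ((N : ℝ) ^ (1/Q - 1/P))) atTop atTop :=
      h1.comp tendsto_natCast_atTop_atTop
    exact h2.const_mul_atTop hc
  obtain ⟨N, hN1, hN2⟩ := ((htend.eventually_gt_atTop (D + 2)).and (eventually_ge_atTop 1)).exists
  exact absurd (key N hN2) (not_le.2 hN1)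


set_option maxHeartbeats 1000000 in
lemma exists_cauchy {p q : ℝ≥0∞} [Fact (1 ≤ p)] [Fact (1 ≤ q)]
    (hp : 0 < p.toReal) (hq : 0 < q.toReal) (hpq : q.toReal < p.toReal)
    (hp0 : p ≠ 0) (hq0 : q ≠ 0)
    (T : Lp p →L[ℂ] Lp q) (x : ℕ → Lp p) (hx : ∀ n, ‖x n‖ ≤ 1) :
    ∃ φ : ℕ → ℕ, StrictMono φ ∧ CauchySeq fun n => T (x (φ n)) := by
  have hTnn : (0:ℝ) ≤ ‖T‖ := norm_nonneg _
  set Ω : Set ((ℕ → ℂ) × (ℕ → ℂ)) :=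
    (Set.univ.pi fun _ => Metric.closedBall 0 1) ×ˢ
      (Set.univ.pi fun _ => Metric.closedBall 0 ‖T‖) with hΩdef
  have hΩ : IsCompact Ω := (isCompact_univ_pi fun _ => isCompact_closedBall 0 1).prod
      (isCompact_univ_pi fun _ => isCompact_closedBall 0 ‖T‖)
  set F : ℕ → (ℕ → ℂ) × (ℕ → ℂ) := fun n => (⇑(x n), ⇑(T (x n))) with hFdef
  have hF : ∀ n, F n ∈ Ω := by
    intro n
    rw [hΩdef, Set.mem_prod]
    constructor
    · intro k _
      simp only [Metric.mem_closedBall, dist_zero_right]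
      exact (lp.norm_apply_le_norm hp0 (x n) k).trans (hx n)
    · intro k _
      simp only [Metric.mem_closedBall, dist_zero_right]
      calc ‖(T (x n)) k‖ ≤ ‖T (x n)‖ := lp.norm_apply_le_norm hq0 _ k
        _ ≤ ‖T‖ * ‖x n‖ := T.le_opNorm _
        _ ≤ ‖T‖ * 1 := mul_le_mul_of_nonneg_left (hx n) hTnn
        _ = ‖T‖ := mul_one _
  obtain ⟨L, _, φ, hφ, hconv⟩ := hΩ.isSeqCompact hF
  have hcv : ∀ k, Tendsto (fun n => (x (φ n) : ℕ → ℂ) k) atTop (𝓝 (L.1 k)) := by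
    intro k
    have h1 : Tendsto (fun n => (F (φ n)).1) atTop (𝓝 L.1) :=
      (continuous_fst.tendsto L).comp hconv
    exact tendsto_pi_nhds.mp h1 k
  have hcw : ∀ k, Tendsto (fun n => (T (x (φ n)) : ℕ → ℂ) k) atTop (𝓝 (L.2 k)) := by
    intro k
    have h1 : Tendsto (fun n => (F (φ n)).2) atTop (𝓝 L.2) :=
      (continuous_snd.tendsto L).comp hconv
    exact tendsto_pi_nhds.mp h1 k
  refine ⟨φ, hφ, ?_⟩
  by_contra hC
  rw [Metric.cauchySeq_iff] at hC
  push_neg at hC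
  obtain ⟨δ, hδ, hB⟩ := hC
  choose m1 hm1 m2 hm2 hdist using hB
  have hm1' : Tendsto m1 atTop atTop := tendsto_atTop_mono hm1 tendsto_id
  have hm2' : Tendsto m2 atTop atTop := tendsto_atTop_mono hm2 tendsto_id
  set u : ℕ → Lp p := fun j => x (φ (m1 j)) - x (φ (m2 j)) with hudef
  refine glide hp hq hpq T hδ u (M := 2) ?_ ?_ ?_ ?_
  · intro j
    calc ‖u j‖ ≤ ‖x (φ (m1 j))‖ + ‖x (φ (m2 j))‖ := norm_sub_le _ _
      _ ≤ 2 := by have := hx (φ (m1 j)); have := hx (φ (m2 j)); linarith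
  · intro k
    have t1 : Tendsto (fun j => (x (φ (m1 j)) : ℕ → ℂ) k) atTop (𝓝 (L.1 k)) :=
      (hcv k).comp hm1'
    have t2 : Tendsto (fun j => (x (φ (m2 j)) : ℕ → ℂ) k) atTop (𝓝 (L.1 k)) :=
      (hcv k).comp hm2'
    have := t1.sub t2
    rw [sub_self] at this
    have heq : (fun j => (u j : ℕ → ℂ) k)
        = fun j => (x (φ (m1 j)) : ℕ → ℂ) k - (x (φ (m2 j)) : ℕ → ℂ) k := by
      funext j
      rw [hudef]
      simp [lp.coeFn_sub]
    rw [heq]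
    exact this
  · intro k
    have t1 : Tendsto (fun j => (T (x (φ (m1 j))) : ℕ → ℂ) k) atTop (𝓝 (L.2 k)) :=
      (hcw k).comp hm1'
    have t2 : Tendsto (fun j => (T (x (φ (m2 j))) : ℕ → ℂ) k) atTop (𝓝 (L.2 k)) :=
      (hcw k).comp hm2'
    have := t1.sub t2
    rw [sub_self] at this
    have heq : (fun j => (T (u j) : ℕ → ℂ) k)
        = fun j => (T (x (φ (m1 j))) : ℕ → ℂ) k - (T (x (φ (m2 j))) : ℕ → ℂ) k := by
      funext j
      rw [hudef]
      simp [map_sub, lp.coeFn_sub]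
    rw [heq]
    exact this
  · intro j
    have h1 : dist (T (x (φ (m1 j)))) (T (x (φ (m2 j)))) = ‖T (u j)‖ := by
      rw [dist_eq_norm, hudef, ← map_sub]
    rw [← h1]
    exact hdist j

end
end Pitt

/-- Pitt's theorem: every bounded operator `ℓ_p → ℓ_q` with `1 ≤ q < p < ∞` is compact. -/
theorem stmt_18 (p q : ℝ≥0∞) [Fact (1 ≤ p)] [Fact (1 ≤ q)] (hqp : q < p) (hp : p < ⊤)
    (T : lp (fun _ : ℕ => ℂ) p →L[ℂ] lp (fun _ : ℕ => ℂ) q) :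
    IsCompactOperator T := by
  have h1p : (1:ℝ≥0∞) ≤ p := Fact.out
  have h1q : (1:ℝ≥0∞) ≤ q := Fact.out
  have hq_top : q ≠ ⊤ := (hqp.trans hp).ne
  have hp_top : p ≠ ⊤ := hp.ne
  have hp_ne : p ≠ 0 := (lt_of_lt_of_le zero_lt_one h1p).ne'
  have hq_ne : q ≠ 0 := (lt_of_lt_of_le zero_lt_one h1q).ne'
  have hp0 : 0 < p.toReal := ENNReal.toReal_pos hp_ne hp_top
  have hq0 : 0 < q.toReal := ENNReal.toReal_pos hq_ne hq_top
  have hpq' : q.toReal < p.toReal := (ENNReal.toReal_lt_toReal hq_top hp_top).mpr hqp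
  apply (isCompactOperator_iff_exists_mem_nhds_isCompact_closure_image _).mpr
  refine ⟨Metric.closedBall 0 1, Metric.closedBall_mem_nhds 0 one_pos, ?_⟩
  apply IsSeqCompact.isCompact
  intro y hy
  have happrox : ∀ n : ℕ, ∃ x : Pitt.Lp p, ‖x‖ ≤ 1 ∧ dist (y n) (T x) < 1/(n+1 : ℝ) := by
    intro n
    obtain ⟨b, hb, hdb⟩ := Metric.mem_closure_iff.mp (hy n) (1/(n+1 : ℝ)) (by positivity)
    obtain ⟨x, hx, rfl⟩ := hb
    refine ⟨x, ?_, hdb⟩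
    simpa [Metric.mem_closedBall, dist_zero_right] using hx
  choose xs hxs hd using happrox
  obtain ⟨φ, hφ, hcauchy⟩ := Pitt.exists_cauchy hp0 hq0 hpq' hp_ne hq_ne T xs hxs
  have hdiff : Tendsto (fun n => y (φ n) - T (xs (φ n))) atTop (𝓝 0) := by
    apply squeeze_zero_norm (a := fun n : ℕ => 1/(n+1 : ℝ)) ?_ ?_
    · intro n
      have h1 : ‖y (φ n) - T (xs (φ n))‖ < 1/((φ n : ℝ)+1) := by
        rw [← dist_eq_norm]; exact hd (φ n)
      have h2 : 1/((φ n : ℝ)+1) ≤ 1/((n : ℝ)+1) := by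
        apply one_div_le_one_div_of_le (by positivity)
        have := hφ.le_apply (x := n)
        have : (n:ℝ) ≤ (φ n : ℝ) := by exact_mod_cast this
        linarith
      linarith
    · exact tendsto_one_div_add_atTop_nhds_zero_nat
  have hyc : CauchySeq (fun n => y (φ n)) := by
    have he : (fun n => y (φ n))
        = (fun n => T (xs (φ n)) + (y (φ n) - T (xs (φ n)))) := by
      funext n; abel
    rw [he]
    exact hcauchy.add hdiff.cauchySeq
  obtain ⟨a, ha⟩ := cauchySeq_tendsto_of_complete hyc
  refine ⟨a, ?_, φ, hφ, ha⟩
  exact isClosed_closure.mem_of_tendsto ha (Filter.Eventually.of_forall fun n => hy (φ n))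
end
end
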